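/- Let x, y be dyadic points in Q = {x ∈ ℝ^d : ‖x‖_∞ ≤ 1} and let m be the smallest nonnegative integer with ‖x−y‖_∞ < 2^{−m}. Then there exist finite sequences (x_r)_{r≥m}, (y_r)_{r≥m} with 2^r x_r, 2^r y_r ∈ ℤ^d, x_r = x and y_r = y for all large r, such that ‖x_m − y_m‖_∞ ∈ {0, 2^{−m}} and ‖x_r − x_{r+1}‖_∞ ∈ {0, 2^{−r−1}}, ‖y_r − y_{r+1}‖_∞ ∈ {0, 2^{−r−1}} for all r ≥ m; i.e., each consecutive pair consists of equal points or dyadic neighbours. -/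

import Mathlib

/-!
Take `X r` and `Y r` to be the coordinatewise roundings down of `x` and `y` to the grid
`2^{-r} ℤ^d`. Since `⌊2a⌋ - 2⌊a⌋ ∈ {0, 1}`, consecutive roundings differ in each coordinate by
`0` or `2^{-r-1}`; since `‖x - y‖_∞ < 2^{-m}`, the roundings at level `m` differ in each
coordinate by `0` or `2^{-m}`; and a dyadic point lies on the grid `2^{-r} ℤ^d` for all large
`r`, where rounding fixes it.
-/

noncomputable section

def IsDyadicPt {d : ℕ} (x : Fin d → ℝ) : Prop :=
  ∀ i, ∃ (a : ℤ) (m : ℕ), x i = (a : ℝ) / 2 ^ m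

open Filter

section Norm

variable {ι : Type*} [Fintype ι]

lemma pi_norm_eq_zero_or_eq {E : Type*} [SeminormedAddCommGroup E] {f : ι → E} {c : ℝ}
    (hc : 0 ≤ c) (h : ∀ i, ‖f i‖ = 0 ∨ ‖f i‖ = c) : ‖f‖ = 0 ∨ ‖f‖ = c := by
  by_cases hex : ∃ i, ‖f i‖ = c
  · obtain ⟨i, hi⟩ := hex
    have hle : ‖f‖ ≤ c := (pi_norm_le_iff_of_nonneg hc).2 fun j =>
      (h j).elim (fun hj => hj ▸ hc) le_of_eq
    exact Or.inr (hle.antisymm (hi ▸ norm_le_pi_norm f i))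
  · push Not at hex
    refine Or.inl (le_antisymm ((pi_norm_le_iff_of_nonneg le_rfl).2 fun i => ?_) (norm_nonneg f))
    exact ((h i).resolve_right (hex i)).le

lemma abs_intCast_div_eq_zero_or_eq_inv {k : ℤ} (hk : |k| ≤ 1) {c : ℝ} (hc : 0 ≤ c) :
    |(k : ℝ) / c| = 0 ∨ |(k : ℝ) / c| = c⁻¹ := by
  rw [abs_div, abs_of_nonneg hc, ← Int.cast_abs]
  rcases (abs_nonneg k).eq_or_lt' with h | h
  · simp [h]
  · simp [show |k| = 1 by omega]

lemma pi_norm_eq_zero_or_eq_inv_of_eq_intCast_div {f : ι → ℝ} {c : ℝ} (hc : 0 ≤ c) (k : ι → ℤ)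
    (hk : ∀ i, |k i| ≤ 1) (hf : ∀ i, f i = k i / c) : ‖f‖ = 0 ∨ ‖f‖ = c⁻¹ :=
  pi_norm_eq_zero_or_eq (inv_nonneg.2 hc) fun i => by
    simpa only [Real.norm_eq_abs, hf i] using abs_intCast_div_eq_zero_or_eq_inv (hk i) hc

end Norm

section Floor

variable {R : Type*} [Field R] [LinearOrder R] [IsStrictOrderedRing R] [FloorRing R]

lemma Int.abs_floor_sub_floor_le_one {a b : R} (h : |a - b| < 1) : |⌊a⌋ - ⌊b⌋| ≤ 1 := by
  obtain ⟨hba, hab⟩ := abs_lt.1 h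
  have h₁ : ⌊a⌋ ≤ ⌊b⌋ + 1 := by
    rw [← Int.floor_add_one]; exact Int.floor_mono (by linarith)
  have h₂ : ⌊b⌋ ≤ ⌊a⌋ + 1 := by
    rw [← Int.floor_add_one]; exact Int.floor_mono (by linarith)
  exact abs_le.2 ⟨by omega, by omega⟩

lemma Int.abs_two_mul_floor_sub_floor_two_mul_le_one (a : R) : |2 * ⌊a⌋ - ⌊2 * a⌋| ≤ 1 := by
  have h₁ : 2 * ⌊a⌋ ≤ ⌊2 * a⌋ := Int.le_floor.2 (by push_cast; linarith [Int.floor_le a])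
  have h₂ : ⌊2 * a⌋ < 2 * ⌊a⌋ + 2 :=
    Int.floor_lt.2 (by push_cast; linarith [Int.lt_floor_add_one a])
  exact abs_le.2 ⟨by omega, by omega⟩

end Floor

section DyadicFloor

variable {ι : Type*}

def dyadicFloor (r : ℕ) (z : ι → ℝ) : ι → ℝ := fun i => ⌊2 ^ r * z i⌋ / 2 ^ r

lemma dyadicFloor_apply (r : ℕ) (z : ι → ℝ) (i : ι) :
    dyadicFloor r z i = ⌊2 ^ r * z i⌋ / 2 ^ r := rfl

lemma intCast_floor_two_pow_mul_div_two_pow {n r : ℕ} (h : n ≤ r) (a : ℤ) :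
    (⌊2 ^ r * ((a : ℝ) / 2 ^ n)⌋ : ℝ) / 2 ^ r = a / 2 ^ n := by
  have hint : (2 : ℝ) ^ r * (a / 2 ^ n) = ((a * 2 ^ (r - n) : ℤ) : ℝ) := by
    rw [← Nat.sub_add_cancel h, pow_add]
    push_cast
    field_simp
    rw [Nat.add_sub_cancel, mul_comm]
  rw [hint, Int.floor_intCast, ← hint]
  field_simp

lemma IsDyadicPt.eventually_dyadicFloor_eq {d : ℕ} {z : Fin d → ℝ} (hz : IsDyadicPt z) :
    ∀ᶠ r in atTop, dyadicFloor r z = z := by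
  choose a n hn using hz
  have hcoord : ∀ᶠ r in atTop, ∀ i, dyadicFloor r z i = z i :=
    eventually_all.2 fun i => (eventually_ge_atTop (n i)).mono fun r hr => by
      rw [dyadicFloor_apply, hn i, intCast_floor_two_pow_mul_div_two_pow hr]
  exact hcoord.mono fun r hr => funext hr

variable [Fintype ι]

lemma norm_dyadicFloor_sub_dyadicFloor_succ (z : ι → ℝ) (r : ℕ) :
    ‖dyadicFloor r z - dyadicFloor (r + 1) z‖ = 0 ∨
      ‖dyadicFloor r z - dyadicFloor (r + 1) z‖ = ((2 : ℝ) ^ (r + 1))⁻¹ := by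
  refine pi_norm_eq_zero_or_eq_inv_of_eq_intCast_div (by positivity)
    (fun i => 2 * ⌊2 ^ r * z i⌋ - ⌊2 * (2 ^ r * z i)⌋)
    (fun i => Int.abs_two_mul_floor_sub_floor_two_mul_le_one _) fun i => ?_
  rw [Pi.sub_apply, dyadicFloor_apply, dyadicFloor_apply, pow_succ, mul_comm _ (2 : ℝ),
    mul_assoc]
  push_cast
  field_simp

lemma norm_dyadicFloor_sub_dyadicFloor {z w : ι → ℝ} {m : ℕ} (h : ‖z - w‖ < ((2 : ℝ) ^ m)⁻¹) :
    ‖dyadicFloor m z - dyadicFloor m w‖ = 0 ∨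
      ‖dyadicFloor m z - dyadicFloor m w‖ = ((2 : ℝ) ^ m)⁻¹ := by
  refine pi_norm_eq_zero_or_eq_inv_of_eq_intCast_div (by positivity)
    (fun i => ⌊2 ^ m * z i⌋ - ⌊2 ^ m * w i⌋) (fun i => Int.abs_floor_sub_floor_le_one ?_)
    fun i => by rw [Pi.sub_apply, dyadicFloor_apply, dyadicFloor_apply]; push_cast; ring
  have hi : |z i - w i| < ((2 : ℝ) ^ m)⁻¹ := (norm_le_pi_norm (z - w) i).trans_lt h
  rw [← mul_sub, abs_mul, abs_of_pos (by positivity)]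
  calc (2 : ℝ) ^ m * |z i - w i| < 2 ^ m * ((2 : ℝ) ^ m)⁻¹ := by gcongr
    _ = 1 := mul_inv_cancel₀ (by positivity)

end DyadicFloor

theorem dyadic_chaining_general {d : ℕ} (x y : Fin d → ℝ)
    (hxd : IsDyadicPt x) (hyd : IsDyadicPt y)
    (m : ℕ) (hm : ‖x - y‖ < ((2 : ℝ) ^ m)⁻¹) :
    ∃ X Y : ℕ → (Fin d → ℝ),
      (∀ r : ℕ, m ≤ r → ∀ i, ∃ a : ℤ, X r i = (a : ℝ) / 2 ^ r) ∧
      (∀ r : ℕ, m ≤ r → ∀ i, ∃ a : ℤ, Y r i = (a : ℝ) / 2 ^ r) ∧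
      (∃ R : ℕ, ∀ r : ℕ, R ≤ r → X r = x ∧ Y r = y) ∧
      (‖X m - Y m‖ = 0 ∨ ‖X m - Y m‖ = ((2 : ℝ) ^ m)⁻¹) ∧
      (∀ r : ℕ, m ≤ r →
        (‖X r - X (r + 1)‖ = 0 ∨ ‖X r - X (r + 1)‖ = ((2 : ℝ) ^ (r + 1))⁻¹) ∧
        (‖Y r - Y (r + 1)‖ = 0 ∨ ‖Y r - Y (r + 1)‖ = ((2 : ℝ) ^ (r + 1))⁻¹)) :=
  ⟨(dyadicFloor · x), (dyadicFloor · y),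
    fun _ _ _ => ⟨_, rfl⟩, fun _ _ _ => ⟨_, rfl⟩,
    eventually_atTop.1 (hxd.eventually_dyadicFloor_eq.and hyd.eventually_dyadicFloor_eq),
    norm_dyadicFloor_sub_dyadicFloor hm,
    fun r _ => ⟨norm_dyadicFloor_sub_dyadicFloor_succ x r,
      norm_dyadicFloor_sub_dyadicFloor_succ y r⟩⟩

/-- the dyadic chaining construction. Given dyadic `x, y` in the unit
sup-norm ball `Q` and `m` the smallest nonnegative integer with `‖x - y‖_∞ < 2^{-m}`,
there are chains `(X_r)_{r ≥ m}`, `(Y_r)_{r ≥ m}` with `2^r X_r, 2^r Y_r ∈ ℤ^d`,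
eventually equal to `x` resp. `y`, such that `X_m, Y_m` and each consecutive pair
`X_r, X_{r+1}` (resp. `Y_r, Y_{r+1}`) are equal or dyadic neighbours. -/
theorem dyadic_chaining {d : ℕ} (x y : Fin d → ℝ)
    (hxQ : ∀ i, |x i| ≤ 1) (hyQ : ∀ i, |y i| ≤ 1)
    (hxd : IsDyadicPt x) (hyd : IsDyadicPt y)
    (m : ℕ) (hm : ‖x - y‖ < ((2 : ℝ) ^ m)⁻¹)
    (hmin : ∀ m' : ℕ, ‖x - y‖ < ((2 : ℝ) ^ m')⁻¹ → m ≤ m') :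
    ∃ X Y : ℕ → (Fin d → ℝ),
      (∀ r : ℕ, m ≤ r → ∀ i, ∃ a : ℤ, X r i = (a : ℝ) / 2 ^ r) ∧
      (∀ r : ℕ, m ≤ r → ∀ i, ∃ a : ℤ, Y r i = (a : ℝ) / 2 ^ r) ∧
      (∃ R : ℕ, ∀ r : ℕ, R ≤ r → X r = x ∧ Y r = y) ∧
      (‖X m - Y m‖ = 0 ∨ ‖X m - Y m‖ = ((2 : ℝ) ^ m)⁻¹) ∧
      (∀ r : ℕ, m ≤ r →
        (‖X r - X (r + 1)‖ = 0 ∨ ‖X r - X (r + 1)‖ = ((2 : ℝ) ^ (r + 1))⁻¹) ∧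
        (‖Y r - Y (r + 1)‖ = 0 ∨ ‖Y r - Y (r + 1)‖ = ((2 : ℝ) ^ (r + 1))⁻¹)) :=
  dyadic_chaining_general x y hxd hyd m hm
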